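/- Let r and k be positive integers and let H be a finite simple graph with at least two vertices. Suppose there exists a vertex c of H with N_r[c] = V(H), and suppose that for every vertex v of H there exists a nonempty induced subgraph H_v of H − v with rk_r(H_v) ≥ k. Then rk_r(H) ≥ k + 1. -/

import Mathlib

/-!
Take the central vertex `c` as the first move in the definition of the rank: its `r`-ball is the
whole graph, so whichever splitter vertex `s` is then removed, what is left is `H - s`, which
contains `H_s`. Since the rank is monotone under taking induced subgraphs, every such answer
leaves rank at least `k`, and the first round adds one.
-/

open Classical

/-- The closed `r`-neighborhood of `c` inside the induced subgraph `G[A]`: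
all vertices of `A` joined to `c` by a walk of length at most `r` staying in `A`. -/
noncomputable def ball {V : Type*} (G : SimpleGraph V) (r : ℕ) (A : Finset V) (c : V) :
    Finset V :=
  A.filter (fun v => ∃ p : G.Walk c v, p.length ≤ r ∧ ∀ x ∈ p.support, x ∈ A)

/-- The `r`-splitter rank of the induced subgraph `G[A]` (with `rank ∅ = 0`). -/
noncomputable def splitterRank {V : Type*} [DecidableEq V] (G : SimpleGraph V) (r : ℕ)
    (A : Finset V) : ℕ :=
  if _ : A.Nonempty then
    1 + A.attach.sup (fun c =>
      (ball G r A c.1).attach.inf'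
        (Finset.attach_nonempty_iff.2 ⟨c.1, Finset.mem_filter.2 ⟨c.2,
          SimpleGraph.Walk.nil, by simp, by simp [c.2]⟩⟩)
        (fun s => splitterRank G r ((ball G r A c.1).erase s.1)))
  else 0
termination_by A.card
decreasing_by
  exact lt_of_lt_of_le (Finset.card_erase_lt_of_mem s.2)
    (Finset.card_le_card (Finset.filter_subset _ _))

section

variable {V : Type*} (G : SimpleGraph V) (r : ℕ)

lemma mem_ball_self {A : Finset V} {c : V} (hc : c ∈ A) : c ∈ ball G r A c :=
  Finset.mem_filter.2 ⟨hc, SimpleGraph.Walk.nil, by simp, by simp [hc]⟩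

lemma ball_subset (A : Finset V) (c : V) : ball G r A c ⊆ A :=
  Finset.filter_subset _ _

lemma ball_mono {A B : Finset V} (h : A ⊆ B) (c : V) : ball G r A c ⊆ ball G r B c := by
  intro v hv
  obtain ⟨hvA, p, hp, hsupp⟩ := Finset.mem_filter.1 hv
  exact Finset.mem_filter.2 ⟨h hvA, p, hp, fun x hx => h (hsupp x hx)⟩

lemma card_erase_ball_lt [DecidableEq V] {A : Finset V} {c s : V} (hs : s ∈ ball G r A c) :
    ((ball G r A c).erase s).card < A.card :=
  (Finset.card_erase_lt_of_mem hs).trans_le (Finset.card_le_card (ball_subset G r A c))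

variable [DecidableEq V]

lemma add_one_le_splitterRank_iff {A : Finset V} {k : ℕ} :
    k + 1 ≤ splitterRank G r A ↔
      ∃ c ∈ A, ∀ s ∈ ball G r A c, k ≤ splitterRank G r ((ball G r A c).erase s) := by
  by_cases hA : A.Nonempty
  · rw [splitterRank, dif_pos hA, add_comm 1, Nat.add_le_add_iff_right,
      ← Finset.sup'_eq_sup (Finset.attach_nonempty_iff.2 hA), Finset.le_sup'_iff]
    simp only [Finset.le_inf'_iff, Finset.mem_attach, forall_const, Subtype.forall, Subtype.exists,
      exists_prop, true_and]
  · rw [splitterRank, dif_neg hA]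
    simp only [Nat.le_zero, Nat.add_one_ne_zero, false_iff, not_exists, not_and]
    exact fun c hc => absurd ⟨c, hc⟩ hA

theorem splitterRank_mono {A B : Finset V} (h : A ⊆ B) :
    splitterRank G r A ≤ splitterRank G r B := by
  cases hAk : splitterRank G r A with
  | zero => exact Nat.zero_le _
  | succ k =>
    obtain ⟨c, hc, hk⟩ := (add_one_le_splitterRank_iff G r).1 hAk.ge
    refine (add_one_le_splitterRank_iff G r).2 ⟨c, h hc, fun s hs => ?_⟩
    by_cases hsA : s ∈ ball G r A c
    · exact (hk s hsA).trans
        (splitterRank_mono (Finset.erase_subset_erase s (ball_mono G r h c)))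
    · -- the splitter answered outside the smaller ball, so answer `c` there instead
      have hsub : (ball G r A c).erase c ⊆ (ball G r B c).erase s := fun x hx =>
        have hxA := Finset.mem_of_mem_erase hx
        Finset.mem_erase.2 ⟨fun hxs => hsA (hxs ▸ hxA), ball_mono G r h c hxA⟩
      exact (hk c (mem_ball_self G r hc)).trans (splitterRank_mono hsub)
termination_by B.card
decreasing_by all_goals exact card_erase_ball_lt G r hs

end

theorem rank_lower_bound_general {V : Type*} [Fintype V] [DecidableEq V]
    (G : SimpleGraph V) (r k : ℕ)
    (hc : ∃ c : V, ball G r Finset.univ c = Finset.univ)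
    (hsub : ∀ v : V, ∃ Hv : Finset V, Hv.Nonempty ∧ Hv ⊆ Finset.univ.erase v ∧
      k ≤ splitterRank G r Hv) :
    k + 1 ≤ splitterRank G r Finset.univ := by
  obtain ⟨c, hc⟩ := hc
  refine (add_one_le_splitterRank_iff G r).2 ⟨c, Finset.mem_univ c, fun s _ => ?_⟩
  obtain ⟨Hv, -, hHv, hk⟩ := hsub s
  rw [hc]
  exact hk.trans (splitterRank_mono G r hHv)

/-- If `H` has a central vertex and for every vertex `v` the graph `H - v` contains a nonempty
induced subgraph of `r`-splitter rank at least `k`, then `rk_r(H) ≥ k + 1`. -/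
theorem rank_lower_bound {V : Type*} [Fintype V] [DecidableEq V]
    (G : SimpleGraph V) (r k : ℕ) (hr : 0 < r) (hk : 0 < k) (h2 : 2 ≤ Fintype.card V)
    (hc : ∃ c : V, ball G r Finset.univ c = Finset.univ)
    (hsub : ∀ v : V, ∃ Hv : Finset V, Hv.Nonempty ∧ Hv ⊆ Finset.univ.erase v ∧
      k ≤ splitterRank G r Hv) :
    k + 1 ≤ splitterRank G r Finset.univ :=
  rank_lower_bound_general G r k hc hsub
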